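/- (Theorem, part ii: one-to-one correspondence of optimal solutions.) Assume U is nonempty. Let W* be an OSDNP-feasible subset of V with indicator x_{W*}. Then W* minimizes TWT_W over all OSDNP-feasible subsets W of V if and only if x_{W*} minimizes the objective ∑_{(u1,u2) ∈ U × U} OD(u1,u2)·(d_acc^x(u1) + d_acc^x(u2)) over all (P)-feasible x : V → {0,1}. -/
import Mathlib


/-- `d_acc^W u`: the minimal access time from urban area `u` to a stop of `W`
(for nonempty finite `W` the infimum below is the minimum). -/
noncomputable def daccW {V U : Type*} (d : U → V → ℝ) (W : Finset V) (u : U) : ℝ :=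
  sInf (d u '' ↑W)

/-- `d_acc u = d_acc^V u`: the minimal access time over all bus stops. -/
noncomputable def daccV {V U : Type*} [Fintype V] (d : U → V → ℝ) (u : U) : ℝ :=
  daccW d Finset.univ u

/-- `d_acc^x u = min_{v ∈ D_u^k} (d u v + (1 − x v) * M)`, the big-M penalized
access time of constraint (2) of program (P), where
`D_u^k = {v | d u v ≤ k u * d_acc u}` (nonempty since `acc u ∈ D_u^k`). -/
noncomputable def daccX {V U : Type*} [Fintype V] (d : U → V → ℝ) (k : U → ℝ)
    (M : ℝ) (x : V → ℝ) (u : U) : ℝ :=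
  sInf ((fun v => d u v + (1 - x v) * M) '' {v | d u v ≤ k u * daccV d u})

/-- The 0/1 indicator vector `x_W` of a subset `W` of `V`. -/
def indW {V : Type*} [DecidableEq V] (W : Finset V) (v : V) : ℝ :=
  if v ∈ W then 1 else 0

/-- A nonempty subset `W ⊆ V` is OSDNP-feasible if (A) the access times do not
increase by more than the factors `k u`, (B) no origin/destination delay increases
by more than the factor `α`, and (C) `|W| ≤ (1 − p_elim) * |V|`. -/
def OSDNPfeasible {V U : Type*} [Fintype V] (d : U → V → ℝ) (k : U → ℝ)
    (PC : V → V → ℝ) (acc : U → V) (α pelim : ℝ) (W : Finset V) : Prop :=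
  W.Nonempty ∧
  (∀ u, daccW d W u ≤ k u * daccV d u) ∧
  (∀ u1 u2, daccW d W u1 + daccW d W u2 + PC (acc u1) (acc u2) ≤
      α * (daccV d u1 + daccV d u2 + PC (acc u1) (acc u2))) ∧
  ((W.card : ℝ) ≤ (1 - pelim) * (Fintype.card V : ℝ))

/-- `x : V → {0,1}` is (P)-feasible if (1) every `u` has a retained stop in `D_u^k`,
(3) the delay constraints hold for `d_acc^x`, and (4) `∑_v x v ≤ (1 − p_elim) * |V|`. -/
def Pfeasible {V U : Type*} [Fintype V] [Fintype U] (d : U → V → ℝ) (k : U → ℝ)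
    (PC : V → V → ℝ) (acc : U → V) (α pelim M : ℝ) (x : V → ℝ) : Prop :=
  (∀ u, ∃ v, d u v ≤ k u * daccV d u ∧ x v = 1) ∧
  (∀ u1 u2, daccX d k M x u1 + daccX d k M x u2 + PC (acc u1) (acc u2) ≤
      α * (daccV d u1 + daccV d u2 + PC (acc u1) (acc u2))) ∧
  (∑ v, x v ≤ (1 - pelim) * (Fintype.card V : ℝ))

/-- The total weighted traveling time
`TWT_W = ∑_{(u1,u2)} OD u1 u2 * (d_acc^W u1 + d_acc^W u2 + PC (acc u1) (acc u2))`. -/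
noncomputable def TWT {V U : Type*} [Fintype V] [Fintype U] (d : U → V → ℝ)
    (PC : V → V → ℝ) (acc : U → V) (OD : U → U → ℕ) (W : Finset V) : ℝ :=
  ∑ q : U × U, (OD q.1 q.2 : ℝ) *
    (daccW d W q.1 + daccW d W q.2 + PC (acc q.1) (acc q.2))

section Aux

variable {V U : Type*} [Fintype V] [Nonempty V]

lemma daccW_le (d : U → V → ℝ) (W : Finset V) (u : U) {v : V} (hv : v ∈ W) :
    daccW d W u ≤ d u v :=
  csInf_le (Set.Finite.bddBelow (W.finite_toSet.image _)) ⟨v, hv, rfl⟩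

lemma daccW_exists (d : U → V → ℝ) {W : Finset V} (hW : W.Nonempty) (u : U) :
    ∃ v ∈ W, daccW d W u = d u v := by
  have h : sInf (d u '' ↑W) ∈ d u '' ↑W :=
    Set.Nonempty.csInf_mem ((Finset.coe_nonempty.mpr hW).image _)
      (W.finite_toSet.image _)
  obtain ⟨v, hv, hveq⟩ := h
  exact ⟨v, hv, hveq.symm⟩

lemma daccV_le (d : U → V → ℝ) (u : U) (v : V) : daccV d u ≤ d u v :=
  daccW_le d _ u (Finset.mem_univ v)

lemma daccV_nonneg (d : U → V → ℝ) (hd : ∀ u v, 0 ≤ d u v) (u : U) :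
    0 ≤ daccV d u := by
  obtain ⟨v, _, hveq⟩ := daccW_exists d (Finset.univ_nonempty (α := V)) u
  rw [daccV, hveq]; exact hd u v

lemma daccX_le (d : U → V → ℝ) (k : U → ℝ) (M : ℝ) (x : V → ℝ) (u : U) {v : V}
    (hv : d u v ≤ k u * daccV d u) :
    daccX d k M x u ≤ d u v + (1 - x v) * M :=
  csInf_le (Set.Finite.bddBelow ((Set.toFinite _).image _)) ⟨v, hv, rfl⟩

lemma daccX_exists (d : U → V → ℝ) (k : U → ℝ) (M : ℝ) (x : V → ℝ) (u : U)
    (hne : ∃ v, d u v ≤ k u * daccV d u) :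
    ∃ v, d u v ≤ k u * daccV d u ∧ daccX d k M x u = d u v + (1 - x v) * M := by
  have h : daccX d k M x u ∈
      (fun v => d u v + (1 - x v) * M) '' {v | d u v ≤ k u * daccV d u} :=
    Set.Nonempty.csInf_mem (let ⟨v, hv⟩ := hne; ⟨_, ⟨v, hv, rfl⟩⟩) ((Set.toFinite _).image _)
  obtain ⟨v, hv, hveq⟩ := h
  exact ⟨v, hv, hveq.symm⟩

/-- Key equality: for a 0/1 vector `x` with support `W` and a retained stop in
`D_u^k`, the penalized access time equals the access time to `W`. -/
lemma daccX_eq_daccW (d : U → V → ℝ) (hd : ∀ u v, 0 ≤ d u v) (k : U → ℝ) (M : ℝ)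
    (hM : ∀ u v, d u v ≤ M) (x : V → ℝ) (W : Finset V)
    (hxW : ∀ v, x v = 1 ↔ v ∈ W) (hx01 : ∀ v, x v = 0 ∨ x v = 1) (u : U)
    (h1 : ∃ v, d u v ≤ k u * daccV d u ∧ x v = 1) :
    daccX d k M x u = daccW d W u := by
  obtain ⟨v1, hv1S, hv1x⟩ := h1
  have hv1W : v1 ∈ W := (hxW v1).mp hv1x
  apply le_antisymm
  · obtain ⟨vs, hvsW, hvs⟩ := daccW_exists d ⟨v1, hv1W⟩ u
    by_cases hvsS : d u vs ≤ k u * daccV d u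
    · have h2 := daccX_le d k M x u hvsS
      have hxvs : x vs = 1 := (hxW vs).mpr hvsW
      rw [hvs]
      calc daccX d k M x u ≤ d u vs + (1 - x vs) * M := h2
        _ = d u vs := by rw [hxvs]; ring
    · push_neg at hvsS
      calc daccX d k M x u ≤ d u v1 + (1 - x v1) * M := daccX_le d k M x u hv1S
        _ = d u v1 := by rw [hv1x]; ring
        _ ≤ k u * daccV d u := hv1S
        _ ≤ d u vs := le_of_lt hvsS
        _ = daccW d W u := hvs.symm
  · obtain ⟨v0, hv0S, hv0⟩ := daccX_exists d k M x u ⟨v1, hv1S⟩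
    rcases hx01 v0 with h0 | h1'
    · calc daccW d W u ≤ d u v1 := daccW_le d W u hv1W
        _ ≤ M := hM u v1
        _ ≤ d u v0 + (1 - x v0) * M := by
            have := hd u v0; rw [h0]; linarith
        _ = daccX d k M x u := hv0.symm
    · have hv0W : v0 ∈ W := (hxW v0).mp h1'
      calc daccW d W u ≤ d u v0 := daccW_le d W u hv0W
        _ = d u v0 + (1 - x v0) * M := by rw [h1']; ring
        _ = daccX d k M x u := hv0.symm

end Aux

/-- Theorem, part ii: one-to-one correspondence of optimal solutions.  For an
OSDNP-feasible `W*`, `W*` minimizes `TWT` over all OSDNP-feasible subsets iff its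
indicator `x_{W*}` minimizes the objective
`∑_{(u1,u2)} OD u1 u2 * (d_acc^x u1 + d_acc^x u2)` over all (P)-feasible 0/1 vectors. -/
theorem stmt12 {V U : Type*} [Fintype V] [Nonempty V] [Fintype U] [Nonempty U]
    [DecidableEq V]
    (d : U → V → ℝ) (hd : ∀ u v, 0 ≤ d u v)
    (k : U → ℝ) (hk : ∀ u, 1 ≤ k u)
    (PC : V → V → ℝ) (hPC : ∀ v1 v2, 0 ≤ PC v1 v2)
    (acc : U → V) (hacc : ∀ u, d u (acc u) = daccV d u)
    (α : ℝ) (hα : 1 ≤ α) (pelim : ℝ) (hp0 : 0 ≤ pelim) (hp1 : pelim ≤ 1)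
    (OD : U → U → ℕ)
    (M : ℝ) (hM : ∀ u v, d u v ≤ M)
    (Wstar : Finset V) (hWstar : OSDNPfeasible d k PC acc α pelim Wstar) :
    (∀ W : Finset V, OSDNPfeasible d k PC acc α pelim W →
        TWT d PC acc OD Wstar ≤ TWT d PC acc OD W) ↔
      (∀ x : V → ℝ, (∀ v, x v = 0 ∨ x v = 1) → Pfeasible d k PC acc α pelim M x →
        ∑ q : U × U, (OD q.1 q.2 : ℝ) *
            (daccX d k M (indW Wstar) q.1 + daccX d k M (indW Wstar) q.2) ≤
          ∑ q : U × U, (OD q.1 q.2 : ℝ) * (daccX d k M x q.1 + daccX d k M x q.2)) := by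
  classical
  -- `daccX` of the indicator of an OSDNP-feasible `W` equals `daccW`
  have hXW : ∀ W : Finset V, OSDNPfeasible d k PC acc α pelim W →
      ∀ u, daccX d k M (indW W) u = daccW d W u := by
    intro W hW u
    refine daccX_eq_daccW d hd k M hM (indW W) W (fun v => ?_) (fun v => ?_) u ?_
    · by_cases h : v ∈ W <;> simp [indW, h]
    · by_cases h : v ∈ W <;> simp [indW, h]
    · obtain ⟨v, hv, hveq⟩ := daccW_exists d hW.1 u
      exact ⟨v, hveq ▸ hW.2.1 u, by simp [indW, hv]⟩
  -- TWT decomposition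
  have hTWT : ∀ W : Finset V, TWT d PC acc OD W =
      (∑ q : U × U, (OD q.1 q.2 : ℝ) * (daccW d W q.1 + daccW d W q.2)) +
        ∑ q : U × U, (OD q.1 q.2 : ℝ) * PC (acc q.1) (acc q.2) := by
    intro W
    rw [TWT, ← Finset.sum_add_distrib]
    exact Finset.sum_congr rfl fun q _ => by ring
  -- sum of an indicator vector equals the cardinality
  have hsum : ∀ (x : V → ℝ) (W : Finset V), (∀ v, x v = 1 ↔ v ∈ W) →
      (∀ v, x v = 0 ∨ x v = 1) → ∑ v, x v = (W.card : ℝ) := by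
    intro x W hxW hx01
    have : ∀ v, x v = if v ∈ W then (1 : ℝ) else 0 := by
      intro v
      by_cases h : v ∈ W
      · simp [h, (hxW v).mpr h]
      · rcases hx01 v with h0 | h1
        · simp [h, h0]
        · exact absurd ((hxW v).mp h1) h
      
    simp only [this]
    simp
  -- indicator of an OSDNP-feasible `W` is (P)-feasible
  have hPfeas : ∀ W : Finset V, OSDNPfeasible d k PC acc α pelim W →
      Pfeasible d k PC acc α pelim M (indW W) := by
    intro W hW
    refine ⟨fun u => ?_, fun u1 u2 => ?_, ?_⟩
    · obtain ⟨v, hv, hveq⟩ := daccW_exists d hW.1 u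
      exact ⟨v, hveq ▸ hW.2.1 u, by simp [indW, hv]⟩
    · rw [hXW W hW u1, hXW W hW u2]; exact hW.2.2.1 u1 u2
    · rw [hsum (indW W) W (fun v => by by_cases h : v ∈ W <;> simp [indW, h])
        (fun v => by by_cases h : v ∈ W <;> simp [indW, h])]
      exact hW.2.2.2
  constructor
  · -- optimal W* ⇒ optimal indicator
    intro hmin x hx01 hxP
    set Wx : Finset V := Finset.univ.filter (fun v => x v = 1) with hWxdef
    have hxW : ∀ v, x v = 1 ↔ v ∈ Wx := by intro v; simp [hWxdef]
    have hEq : ∀ u, daccX d k M x u = daccW d Wx u := by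
      intro u
      obtain ⟨v, hv, hxv⟩ := hxP.1 u
      exact daccX_eq_daccW d hd k M hM x Wx hxW hx01 u ⟨v, hv, hxv⟩
    have hWxfeas : OSDNPfeasible d k PC acc α pelim Wx := by
      obtain ⟨v0, hv0, hxv0⟩ := hxP.1 (Classical.arbitrary U)
      refine ⟨⟨v0, (hxW v0).mp hxv0⟩, fun u => ?_, fun u1 u2 => ?_, ?_⟩
      · obtain ⟨v, hv, hxv⟩ := hxP.1 u
        exact le_trans (daccW_le d Wx u ((hxW v).mp hxv)) hv
      · rw [← hEq u1, ← hEq u2]; exact hxP.2.1 u1 u2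
      · rw [← hsum x Wx hxW hx01]; exact hxP.2.2
    have h := hmin Wx hWxfeas
    rw [hTWT Wstar, hTWT Wx] at h
    have e1 : ∑ q : U × U, (OD q.1 q.2 : ℝ) *
        (daccX d k M (indW Wstar) q.1 + daccX d k M (indW Wstar) q.2) =
        ∑ q : U × U, (OD q.1 q.2 : ℝ) * (daccW d Wstar q.1 + daccW d Wstar q.2) :=
      Finset.sum_congr rfl fun q _ => by rw [hXW Wstar hWstar q.1, hXW Wstar hWstar q.2]
    have e2 : ∑ q : U × U, (OD q.1 q.2 : ℝ) * (daccX d k M x q.1 + daccX d k M x q.2) =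
        ∑ q : U × U, (OD q.1 q.2 : ℝ) * (daccW d Wx q.1 + daccW d Wx q.2) :=
      Finset.sum_congr rfl fun q _ => by rw [hEq q.1, hEq q.2]
    rw [e1, e2]; linarith
  · -- optimal indicator ⇒ optimal W*
    intro hmin W hWfeas
    have h := hmin (indW W) (fun v => by by_cases h : v ∈ W <;> simp [indW, h])
      (hPfeas W hWfeas)
    have e1 : ∑ q : U × U, (OD q.1 q.2 : ℝ) *
        (daccX d k M (indW Wstar) q.1 + daccX d k M (indW Wstar) q.2) =
        ∑ q : U × U, (OD q.1 q.2 : ℝ) * (daccW d Wstar q.1 + daccW d Wstar q.2) :=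
      Finset.sum_congr rfl fun q _ => by rw [hXW Wstar hWstar q.1, hXW Wstar hWstar q.2]
    have e2 : ∑ q : U × U, (OD q.1 q.2 : ℝ) *
        (daccX d k M (indW W) q.1 + daccX d k M (indW W) q.2) =
        ∑ q : U × U, (OD q.1 q.2 : ℝ) * (daccW d W q.1 + daccW d W q.2) :=
      Finset.sum_congr rfl fun q _ => by rw [hXW W hWfeas q.1, hXW W hWfeas q.2]
    rw [e1, e2] at h
    rw [hTWT Wstar, hTWT W]
    linarith
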